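/- arXiv:0712.2957 — 3 statements merged into one kernel-verified Lean document; each statement's English description precedes it below -/
import Mathlib

section
/- For n ≥ 0 the function uₙ(x) = (A x^q D⁻¹ + k₀)ⁿ 1 (with D⁻¹ integration from 0, A ≠ 0, q > -1) is given explicitly by uₙ(x) = Σ_{j=0}^{n} C(n,j) k₀^{n-j} A^j x^{j(q+1)} / ∏_{i=1}^{j-1}(i·q + i + 1), where the empty product (j = 0, 1) equals 1 and the denominator product is (q+2)(2q+3)···((j-1)q+j). -/
open intervalIntegral Finset

noncomputable def Mop (A q k₀ : ℝ) (f : ℝ → ℝ) : ℝ → ℝ :=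
  fun x => A * x ^ q * (∫ t in (0 : ℝ)..x, f t) + k₀ * f x

/-! Write `e_j` for `(x ^ q D⁻¹) ^ j 1`. Since `∫₀^x t ^ (j(q+1)) dt = x ^ (j(q+1)+1) / (j(q+1)+1)`,
each `e_j` is the stated monomial `x ^ (j(q+1)) / ∏_{i<j} (i(q+1)+1)`, and `x ^ q D⁻¹ e_j = e_(j+1)`.
As `x ^ q D⁻¹` and multiplication by `k₀` commute on the span of the `e_j`, expanding
`(A x ^ q D⁻¹ + k₀) ^ n 1` is the binomial theorem, proved by induction through Pascal's rule. -/

theorem Finset.sum_range_choose_succ_mul_pow {R : Type*} [CommSemiring R] (a b : R)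
    (T : ℕ → R) (n : ℕ) :
    ∑ j ∈ range (n + 2), ((n + 1).choose j : R) * a ^ (n + 1 - j) * b ^ j * T j =
      a * ∑ j ∈ range (n + 1), (n.choose j : R) * a ^ (n - j) * b ^ j * T j +
        b * ∑ j ∈ range (n + 1), (n.choose j : R) * a ^ (n - j) * b ^ j * T (j + 1) := by
  have hshift : a * ∑ j ∈ range (n + 1), (n.choose j : R) * a ^ (n - j) * b ^ j * T j =
      ∑ j ∈ range (n + 1), (n.choose (j + 1) : R) * a ^ (n - j) * b ^ (j + 1) * T (j + 1) +
        a ^ (n + 1) * T 0 := by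
    rw [sum_range_succ', sum_range_succ _ n, Nat.choose_succ_self, mul_add, mul_sum]
    congr 1
    · rw [Nat.cast_zero, zero_mul, zero_mul, zero_mul, add_zero]
      refine sum_congr rfl fun j hj => ?_
      rw [show n - j = n - (j + 1) + 1 by grind, pow_succ]
      ring
    · simp only [Nat.choose_zero_right, Nat.cast_one, Nat.sub_zero, pow_zero]
      ring
  rw [sum_range_succ', hshift, mul_sum, add_right_comm, ← sum_add_distrib]
  simp only [Nat.choose_succ_succ, Nat.succ_sub_succ, Nat.choose_zero_right]
  push_cast
  congr 1
  · exact sum_congr rfl fun j _ => by ring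
  · simp

theorem Finset.prod_Icc_one_eq_prod_Icc_one_sub_one_mul {M : Type*} [CommMonoid M]
    (g : ℕ → M) (hg : g 0 = 1) (j : ℕ) :
    ∏ i ∈ Icc 1 j, g i = (∏ i ∈ Icc 1 (j - 1), g i) * g j := by
  cases j with
  | zero => simp [hg]
  | succ j => rw [prod_Icc_succ_top (Nat.le_add_left 1 j), Nat.add_sub_cancel]

theorem integral_rpow_zero_left {r : ℝ} (hr : -1 < r) (x : ℝ) :
    ∫ t in (0 : ℝ)..x, t ^ r = x ^ (r + 1) / (r + 1) := by
  rw [integral_rpow (Or.inl hr), Real.zero_rpow (by linarith), sub_zero]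

/-- `mopMonomial q j = (x ^ q D⁻¹) ^ j 1` on `(0, ∞)`. -/
noncomputable def mopMonomial (q : ℝ) (j : ℕ) (x : ℝ) : ℝ :=
  x ^ ((j : ℝ) * (q + 1)) / ∏ i ∈ Icc 1 (j - 1), ((i : ℝ) * q + i + 1)

theorem intervalIntegrable_mopMonomial {q : ℝ} (hq : -1 < q) (j : ℕ) (a b : ℝ) :
    IntervalIntegrable (mopMonomial q j) MeasureTheory.volume a b :=
  (intervalIntegrable_rpow' (by nlinarith [(j.cast_nonneg : (0 : ℝ) ≤ j)])).div_const _

theorem rpow_mul_integral_mopMonomial {q : ℝ} (hq : -1 < q) {x : ℝ} (hx : 0 < x) (j : ℕ) :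
    x ^ q * ∫ t in (0 : ℝ)..x, mopMonomial q j t = mopMonomial q (j + 1) x := by
  have hj : -1 < (j : ℝ) * (q + 1) := by nlinarith [(j.cast_nonneg : (0 : ℝ) ≤ j)]
  unfold mopMonomial
  rw [integral_div, integral_rpow_zero_left hj, Nat.add_sub_cancel,
    prod_Icc_one_eq_prod_Icc_one_sub_one_mul _ (by simp) j,
    show ((j + 1 : ℕ) : ℝ) * (q + 1) = q + (j * (q + 1) + 1) by push_cast; ring,
    Real.rpow_add hx q, div_div, mul_div_assoc]
  congr 2
  ring

noncomputable def mopPoly (A q k₀ : ℝ) (n : ℕ) (x : ℝ) : ℝ :=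
  ∑ j ∈ range (n + 1), (n.choose j : ℝ) * k₀ ^ (n - j) * A ^ j * mopMonomial q j x

theorem Mop_congr_of_eqOn_Ioi {A q k₀ : ℝ} {f g : ℝ → ℝ} (hfg : Set.EqOn f g (Set.Ioi 0))
    {x : ℝ} (hx : 0 < x) : Mop A q k₀ f x = Mop A q k₀ g x := by
  have hint : ∫ t in (0 : ℝ)..x, f t = ∫ t in (0 : ℝ)..x, g t :=
    integral_congr_ae (.of_forall fun t ht => hfg (Set.uIoc_of_le hx.le ▸ ht).1)
  simp only [Mop, hint, hfg hx]

theorem Mop_mopPoly (A k₀ : ℝ) {q : ℝ} (hq : -1 < q) (n : ℕ) {x : ℝ} (hx : 0 < x) :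
    Mop A q k₀ (mopPoly A q k₀ n) x = mopPoly A q k₀ (n + 1) x := by
  unfold Mop mopPoly
  rw [integral_finsetSum fun j _ => (intervalIntegrable_mopMonomial hq j _ _).const_mul _,
    add_comm, sum_range_choose_succ_mul_pow k₀ A (fun j => mopMonomial q j x),
    mul_sum, mul_sum, mul_sum]
  refine congrArg (_ + ·) (sum_congr rfl fun j _ => ?_)
  rw [integral_const_mul, ← rpow_mul_integral_mopMonomial hq hx]
  ring

theorem iterate_Mop_one_eqOn_mopPoly (A k₀ : ℝ) {q : ℝ} (hq : -1 < q) (n : ℕ) :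
    Set.EqOn ((Mop A q k₀)^[n] fun _ => 1) (mopPoly A q k₀ n) (Set.Ioi 0) := by
  induction n with
  | zero => intro x _; simp [mopPoly, mopMonomial]
  | succ n ih =>
    intro x hx
    rw [Function.iterate_succ_apply', Mop_congr_of_eqOn_Ioi ih hx, Mop_mopPoly A k₀ hq n hx]

theorem stmt6_general (A q k₀ : ℝ) (hq : -1 < q) (n : ℕ) (x : ℝ) (hx : 0 < x) :
    ((Mop A q k₀)^[n] (fun _ => 1)) x =
      ∑ j ∈ Finset.range (n + 1), (n.choose j : ℝ) * k₀ ^ (n - j) *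
        A ^ j * x ^ ((j : ℝ) * (q + 1)) /
        (∏ i ∈ Finset.Icc 1 (j - 1), ((i : ℝ) * q + i + 1)) := by
  simp only [iterate_Mop_one_eqOn_mopPoly A k₀ hq n hx, mopPoly, mopMonomial, mul_div_assoc]

/-- explicit formula
`uₙ(x) = Σ_{j=0}^n C(n,j) k₀^{n-j} A^j x^{j(q+1)} / ∏_{i=1}^{j-1} (i q + i + 1)`
for `uₙ = (A x^q D⁻¹ + k₀)ⁿ 1`. -/
theorem stmt6 (A q k₀ : ℝ) (hA : A ≠ 0) (hq : -1 < q) (n : ℕ) (x : ℝ) (hx : 0 < x) :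
    ((Mop A q k₀)^[n] (fun _ => 1)) x =
      ∑ j ∈ Finset.range (n + 1), (n.choose j : ℝ) * k₀ ^ (n - j) *
        A ^ j * x ^ ((j : ℝ) * (q + 1)) /
        (∏ i ∈ Finset.Icc 1 (j - 1), ((i : ℝ) * q + i + 1)) :=
  stmt6_general A q k₀ hq n x hx
end

section
/- For A ≠ 0, q > -1, k₀ ≠ 0, the monomial uₙ(x) = (A x^q D⁻¹ + k₀)ⁿ 1 satisfies uₙ(x) = [Γ(1/(1+q)) n! / Γ(n + 1/(1+q))] k₀ⁿ Lₙ^{(α)}(z), where α = -q/(q+1), z = -A x^{q+1}/(k₀(q+1)), and Lₙ^{(α)} is the generalized Laguerre polynomial Lₙ^{(α)}(z) = Σ_{j=0}^n binom(n+α, n-j) (-z)^j / j!. -/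
/-! With `β = 1 / (q + 1)`, the functions `e_j = mopBasis A q j`
satisfy `e_0 = 1` and `A x^q ∫₀ˣ e_j = e_(j+1)` (the recursion `Γ(j + 1 + β) = (j + β) Γ(j + β)`
absorbs the factor `1 / ((q+1) j + 1)` produced by integrating). So on their span the operator is
"shift plus `k₀`", and the binomial theorem gives `uₙ = Σ_j C(n,j) k₀^(n-j) e_j`, which is the
Laguerre sum once one notes `α + 1 = β`. -/

open intervalIntegral Finset

/-- The generalized Laguerre polynomial
`Lₙ^{(α)}(z) = Σ_{j=0}^n binom(n+α, n-j) (-z)^j / j!` with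
`binom(n+α, n-j) = Γ(n+α+1)/(Γ(j+α+1)(n-j)!)`. -/
noncomputable def genLaguerre (n : ℕ) (α z : ℝ) : ℝ :=
  ∑ j ∈ Finset.range (n + 1),
    (-1 : ℝ) ^ j * (Real.Gamma ((n : ℝ) + α + 1) /
      (Real.Gamma ((j : ℝ) + α + 1) * ((n - j).factorial : ℝ))) * z ^ j /
      (j.factorial : ℝ)

noncomputable def mopBasis (A q : ℝ) (j : ℕ) (x : ℝ) : ℝ :=
  Real.Gamma (1 / (q + 1)) / Real.Gamma (j + 1 / (q + 1)) * (A * x ^ (q + 1) / (q + 1)) ^ j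

section

variable {A q : ℝ}

lemma continuous_mopBasis (hq : -1 < q) (j : ℕ) : Continuous (mopBasis A q j) := by
  unfold mopBasis
  have : Continuous fun x : ℝ => x ^ (q + 1) := Real.continuous_rpow_const (by linarith)
  fun_prop

lemma Gamma_div_Gamma_nat_add_succ (hq : -1 < q) (j : ℕ) :
    Real.Gamma (1 / (q + 1)) / Real.Gamma ((j + 1 : ℕ) + 1 / (q + 1)) * (A / (q + 1)) ^ (j + 1) =
      Real.Gamma (1 / (q + 1)) / Real.Gamma (j + 1 / (q + 1)) * (A / (q + 1)) ^ j *
        (A / ((q + 1) * j + 1)) := by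
  have hq1 : 0 < q + 1 := by linarith
  have hpos : 0 < (j : ℝ) + 1 / (q + 1) := by positivity
  rw [Nat.cast_succ, add_right_comm, Real.Gamma_add_one hpos.ne',
    show (q + 1) * j + 1 = (q + 1) * (j + 1 / (q + 1)) by field_simp]
  have := (Real.Gamma_pos_of_pos hpos).ne'
  field_simp
  rw [pow_succ]
  field_simp

lemma mul_integral_mopBasis (hq : -1 < q) (j : ℕ) {x : ℝ} (hx : 0 < x) :
    A * x ^ q * ∫ t in (0 : ℝ)..x, mopBasis A q j t = mopBasis A q (j + 1) x := by
  have hq1 : 0 < q + 1 := by linarith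
  have hexp : 0 ≤ (q + 1) * j := by positivity
  have hbasis : ∀ {t : ℝ}, 0 ≤ t → ∀ i : ℕ, mopBasis A q i t =
      Real.Gamma (1 / (q + 1)) / Real.Gamma (i + 1 / (q + 1)) * (A / (q + 1)) ^ i *
        t ^ ((q + 1) * i) := fun ht i => by
    rw [mopBasis, mul_div_right_comm, mul_pow, Real.rpow_mul ht, Real.rpow_natCast, mul_assoc]
  have hint : ∫ t in (0 : ℝ)..x, t ^ ((q + 1) * j) = x ^ ((q + 1) * j + 1) / ((q + 1) * j + 1) := by
    rw [integral_rpow (Or.inl (by linarith)), Real.zero_rpow (by positivity), sub_zero]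
  have hxpow : x ^ q * x ^ ((q + 1) * j + 1) = x ^ ((q + 1) * (j + 1 : ℕ)) := by
    rw [← Real.rpow_add hx]
    push_cast
    ring_nf
  rw [intervalIntegral.integral_congr fun t ht => hbasis (t := t) ?_ j,
    intervalIntegral.integral_const_mul, hint, hbasis hx.le, ← hxpow,
    Gamma_div_Gamma_nat_add_succ hq]
  · field_simp
  · rw [Set.uIcc_of_le hx.le] at ht
    exact ht.1

lemma mopBasis_zero (hq : -1 < q) (x : ℝ) : mopBasis A q 0 x = 1 := by
  have : 0 < (q + 1)⁻¹ := inv_pos.mpr (by linarith)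
  simp [mopBasis, (Real.Gamma_pos_of_pos this).ne']

lemma Mop_iterate_one_eq_sum (k₀ : ℝ) (hq : -1 < q) (n : ℕ) {x : ℝ} (hx : 0 < x) :
    ((Mop A q k₀)^[n] fun _ => 1) x =
      ∑ ij ∈ antidiagonal n, (n.choose ij.1 : ℝ) * (k₀ ^ ij.2 * mopBasis A q ij.1 x) := by
  induction n generalizing x with
  | zero => simp [mopBasis_zero hq]
  | succ n ih =>
    have hint : ∫ t in (0 : ℝ)..x, ((Mop A q k₀)^[n] fun _ => 1) t =
        ∑ ij ∈ antidiagonal n, (n.choose ij.1 : ℝ) *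
          (k₀ ^ ij.2 * ∫ t in (0 : ℝ)..x, mopBasis A q ij.1 t) := by
      rw [intervalIntegral.integral_congr_ae (Filter.Eventually.of_forall fun t ht => ih ?_),
        intervalIntegral.integral_finsetSum]
      · simp only [intervalIntegral.integral_const_mul]
      · exact fun i _ => ((continuous_mopBasis hq i.1).intervalIntegrable 0 x).const_mul _
          |>.const_mul _
      · rw [Set.uIoc_of_le hx.le] at ht
        exact ht.1
    rw [Function.iterate_succ_apply', Mop, hint, ih hx, mul_sum, mul_sum,
      sum_antidiagonal_choose_succ_mul (fun i j => k₀ ^ j * mopBasis A q i x), add_comm]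
    congr 1
    · refine sum_congr rfl fun ij _ => ?_
      ring
    · refine sum_congr rfl fun ij hij => ?_
      rw [← mul_integral_mopBasis hq _ hx, Nat.choose_symm_of_eq_add (mem_antidiagonal.mp hij).symm]
      ring

end

lemma genLaguerre_eq_sum_choose (n : ℕ) (α z : ℝ) :
    genLaguerre n α z = ∑ j ∈ range (n + 1),
      Real.Gamma (n + α + 1) / n.factorial * n.choose j / Real.Gamma (j + α + 1) * (-z) ^ j := by
  refine sum_congr rfl fun j hj => ?_
  rw [Nat.cast_choose ℝ (Nat.lt_succ_iff.mp (mem_range.mp hj)), neg_pow z]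
  have := (n - j).factorial_ne_zero
  have := j.factorial_ne_zero
  have := n.factorial_ne_zero
  field_simp

theorem stmt7_general (A q k₀ : ℝ) (hq : -1 < q) (hk : k₀ ≠ 0)
    (n : ℕ) (x : ℝ) (hx : 0 < x) :
    ((Mop A q k₀)^[n] (fun _ => 1)) x =
      Real.Gamma (1 / (1 + q)) * (n.factorial : ℝ) /
          Real.Gamma ((n : ℝ) + 1 / (1 + q)) * k₀ ^ n *
        genLaguerre n (-q / (q + 1)) (-A * x ^ (q + 1) / (k₀ * (q + 1))) := by
  have hq1 : 0 < q + 1 := by linarith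
  have hα : -q / (q + 1) + 1 = 1 / (q + 1) := by
    field_simp
    ring
  have hz : -(-A * x ^ (q + 1) / (k₀ * (q + 1))) = A * x ^ (q + 1) / (q + 1) / k₀ := by
    field_simp
  have hΓ : Real.Gamma (n + 1 / (q + 1)) ≠ 0 := (Real.Gamma_pos_of_pos (by positivity)).ne'
  rw [Mop_iterate_one_eq_sum k₀ hq n hx,
    Nat.sum_antidiagonal_eq_sum_range_succ (fun i j => (n.choose i : ℝ) * (k₀ ^ j * mopBasis A q i x)),
    genLaguerre_eq_sum_choose, mul_sum, add_comm 1 q]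
  refine sum_congr rfl fun j hj => ?_
  rw [add_assoc, add_assoc, hα, hz, div_pow, mopBasis,
    ← pow_sub_mul_pow k₀ (Nat.lt_succ_iff.mp (mem_range.mp hj))]
  have := n.factorial_ne_zero
  field_simp

/-- `uₙ(x) = [Γ(1/(1+q)) n! / Γ(n+1/(1+q))] k₀ⁿ Lₙ^{(α)}(z)` with
`α = -q/(q+1)`, `z = -A x^{q+1}/(k₀(q+1))`. -/
theorem stmt7 (A q k₀ : ℝ) (hA : A ≠ 0) (hq : -1 < q) (hk : k₀ ≠ 0)
    (n : ℕ) (x : ℝ) (hx : 0 < x) :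
    ((Mop A q k₀)^[n] (fun _ => 1)) x =
      Real.Gamma (1 / (1 + q)) * (n.factorial : ℝ) /
          Real.Gamma ((n : ℝ) + 1 / (1 + q)) * k₀ ^ n *
        genLaguerre n (-q / (q + 1)) (-A * x ^ (q + 1) / (k₀ * (q + 1))) :=
  stmt7_general A q k₀ hq hk n x hx
end

section
/- Fix A ≠ 0, q > -1. For y ≠ 0 define πₙ(x,y) = (A x^q D⁻¹ + y)ⁿ 1 where D⁻¹ is integration from 0. Then πₙ, as a function of the two variables (x,y), satisfies ∂πₙ/∂y = (1/(A(q+1))) D_x (x^{1-q} D_x πₙ), i.e., πₙ is a polynomial-type solution of the variable-conductivity heat equation with y playing the role of time. -/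
open intervalIntegral

/-- The two-variable monomials `πₙ(x,y) = (A x^q D⁻¹ + y)ⁿ 1`. -/
noncomputable def piMon (A q : ℝ) : ℕ → ℝ → ℝ → ℝ
  | 0, _, _ => 1
  | n + 1, x, y =>
      A * x ^ q * (∫ t in (0 : ℝ)..x, piMon A q n t y) + y * piMon A q n x y

/-!
For `x > 0`, induction on `n` with `∫₀ˣ t^r dt = x^(r+1)/(r+1)` gives the closed form
`πₙ(x,y) = ∑ⱼ C(n,j) y^(n-j) eⱼ(x)` with `eⱼ(x) = Aʲ x^(j(q+1)) / ((q+2)(2q+3)⋯((j-1)q+j))`: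
the operator `A x^q D⁻¹` raises `eⱼ` to `eⱼ₊₁`. The operator `(A(q+1))⁻¹ D x^(1-q) D` lowers `eⱼ`
to `j eⱼ₋₁`, so on this binomial sum it acts exactly as `∂/∂y` does: both send `πₙ` to `n πₙ₋₁`.
-/

open Finset

section BinomSum

variable {R : Type*} [CommRing R]

def binomSum (e : ℕ → R) (y : R) (n : ℕ) : R :=
  ∑ j ∈ range (n + 1), (n.choose j : R) * y ^ (n - j) * e j

@[simp]
lemma binomSum_zero (e : ℕ → R) (y : R) : binomSum e y 0 = e 0 := by
  simp [binomSum]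

lemma binomSum_succ (e : ℕ → R) (y : R) (n : ℕ) :
    binomSum e y (n + 1) = binomSum (fun j => e (j + 1)) y n + y * binomSum e y n := by
  have h := sum_choose_succ_mul (fun i k => y ^ k * e i) n
  simp only [← mul_assoc] at h
  rw [binomSum, h, add_comm, binomSum, binomSum, mul_sum]
  congr 1
  refine sum_congr rfl fun j hj => ?_
  rw [Nat.sub_add_comm (mem_range_succ_iff.mp hj), pow_succ]
  ring

lemma mul_binomSum (c : R) (e : ℕ → R) (y : R) (n : ℕ) :
    c * binomSum e y n = binomSum (fun j => c * e j) y n := by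
  simp only [binomSum, mul_sum]
  exact sum_congr rfl fun j _ => by ring

lemma binomSum_natCast_mul_pred (e : ℕ → R) (y : R) (n : ℕ) :
    binomSum (fun j => (j : R) * e (j - 1)) y n = n * binomSum e y (n - 1) := by
  cases n with
  | zero => simp
  | succ n =>
    rw [binomSum, sum_range_succ', Nat.add_sub_cancel, binomSum, mul_sum]
    simp only [Nat.cast_zero, zero_mul, mul_zero, add_zero, Nat.add_sub_cancel,
      Nat.add_sub_add_right]
    refine sum_congr rfl fun j _ => ?_
    have h := congrArg (Nat.cast (R := R)) (Nat.add_one_mul_choose_eq n j)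
    push_cast at h ⊢
    linear_combination (y ^ (n - j) * e j) * h.symm

end BinomSum

lemma hasDerivAt_binomSum (e : ℕ → ℝ) (y : ℝ) (n : ℕ) :
    HasDerivAt (fun y => binomSum e y n) (n * binomSum e y (n - 1)) y := by
  induction n generalizing e with
  | zero => simpa using hasDerivAt_const y (e 0)
  | succ n ih =>
    simp only [binomSum_succ]
    refine ((ih fun j => e (j + 1)).add ((hasDerivAt_id' y).mul (ih e))).congr_deriv ?_
    cases n with
    | zero => simp
    | succ m =>
      simp only [Nat.add_sub_cancel, binomSum_succ e y m]
      push_cast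
      ring

lemma HasDerivAt.binomSum {f : ℕ → ℝ → ℝ} {f' : ℕ → ℝ} {x : ℝ} (y : ℝ) (n : ℕ)
    (hf : ∀ j, HasDerivAt (f j) (f' j) x) :
    HasDerivAt (fun x => binomSum (fun j => f j x) y n) (binomSum f' y n) x :=
  HasDerivAt.fun_sum fun j _ => (hf j).const_mul _

lemma integral_binomSum {f : ℕ → ℝ → ℝ} {μ : MeasureTheory.Measure ℝ} {a b : ℝ} (y : ℝ) (n : ℕ)
    (hf : ∀ j, IntervalIntegrable (f j) μ a b) :
    ∫ t in a..b, binomSum (fun j => f j t) y n ∂μ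
      = binomSum (fun j => ∫ t in a..b, f j t ∂μ) y n := by
  simp only [binomSum]
  rw [integral_finsetSum fun j _ => (hf j).const_mul _]
  simp only [integral_const_mul]

noncomputable def piDenom (q : ℝ) : ℕ → ℝ
  | 0 => 1
  | j + 1 => piDenom q j * ((j : ℝ) * (q + 1) + 1)

noncomputable def piBasis (A q : ℝ) (j : ℕ) (x : ℝ) : ℝ :=
  A ^ j / piDenom q j * x ^ ((j : ℝ) * (q + 1))

section PiBasis

variable {A q : ℝ}

lemma natCast_mul_add_one_pos (hq : -1 < q) (j : ℕ) : 0 < (j : ℝ) * (q + 1) + 1 := by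
  have : (0 : ℝ) ≤ j * (q + 1) := mul_nonneg j.cast_nonneg (by linarith)
  linarith

lemma piDenom_pos (hq : -1 < q) : ∀ j, 0 < piDenom q j
  | 0 => one_pos
  | j + 1 => mul_pos (piDenom_pos hq j) (natCast_mul_add_one_pos hq j)

lemma intervalIntegrable_piBasis (hq : -1 < q) (j : ℕ) (a b : ℝ) :
    IntervalIntegrable (piBasis A q j) MeasureTheory.volume a b :=
  (intervalIntegrable_rpow' (by linarith [natCast_mul_add_one_pos hq j])).const_mul _

lemma mul_integral_piBasis (hq : -1 < q) (j : ℕ) {x : ℝ} (hx : 0 < x) :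
    A * x ^ q * ∫ t in (0 : ℝ)..x, piBasis A q j t = piBasis A q (j + 1) x := by
  have hj := natCast_mul_add_one_pos hq j
  simp only [piBasis, integral_const_mul]
  have hpow : x ^ ((↑(j + 1) : ℝ) * (q + 1)) = x ^ q * x ^ ((j : ℝ) * (q + 1) + 1) := by
    rw [← Real.rpow_add hx]
    push_cast
    ring_nf
  have := (piDenom_pos hq j).ne'
  rw [integral_rpow (Or.inl (by linarith)), Real.zero_rpow hj.ne', sub_zero, hpow, piDenom,
    pow_succ]
  field_simp

lemma hasDerivAt_piBasis (j : ℕ) {x : ℝ} (hx : x ≠ 0) :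
    HasDerivAt (piBasis A q j)
      (A ^ j / piDenom q j * ((j : ℝ) * (q + 1) * x ^ ((j : ℝ) * (q + 1) - 1))) x :=
  (Real.hasDerivAt_rpow_const (Or.inl hx)).const_mul _

lemma hasDerivAt_rpow_mul_deriv_piBasis (hq : -1 < q) (j : ℕ) {x : ℝ} (hx : 0 < x) :
    HasDerivAt (fun x => x ^ (1 - q) * deriv (piBasis A q j) x)
      (A * (q + 1) * (j * piBasis A q (j - 1) x)) x := by
  set c := A ^ j / piDenom q j * ((j : ℝ) * (q + 1))
  have hflux : (fun x => x ^ (1 - q) * deriv (piBasis A q j) x)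
      =ᶠ[nhds x] fun x => c * x ^ ((j : ℝ) * (q + 1) - q) := by
    filter_upwards [Ioi_mem_nhds hx] with t ht
    rw [(hasDerivAt_piBasis j ht.ne').deriv, show (j : ℝ) * (q + 1) - q = (1 - q) + (j * (q + 1) - 1)
      by ring, Real.rpow_add ht]
    ring
  refine (((Real.hasDerivAt_rpow_const (Or.inl hx.ne')).const_mul c).congr_of_eventuallyEq
    hflux).congr_deriv ?_
  cases j with
  | zero => simp [c]
  | succ k =>
    have := (piDenom_pos hq k).ne'
    have := (natCast_mul_add_one_pos hq k).ne'
    simp only [c, piBasis, piDenom, Nat.add_sub_cancel, pow_succ]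
    rw [show ((k + 1 : ℕ) : ℝ) * (q + 1) - q - 1 = k * (q + 1) by push_cast; ring,
      show ((k + 1 : ℕ) : ℝ) * (q + 1) - q = k * (q + 1) + 1 by push_cast; ring]
    field_simp

end PiBasis

lemma piMon_eq_binomSum (A : ℝ) {q : ℝ} (hq : -1 < q) (n : ℕ) (y : ℝ) {x : ℝ} (hx : 0 < x) :
    piMon A q n x y = binomSum (fun j => piBasis A q j x) y n := by
  induction n generalizing x with
  | zero => simp [piMon, piBasis, piDenom]
  | succ n ih =>
    have hint : ∫ t in (0 : ℝ)..x, piMon A q n t y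
        = binomSum (fun j => ∫ t in (0 : ℝ)..x, piBasis A q j t) y n := by
      rw [← integral_binomSum y n fun j => intervalIntegrable_piBasis hq j 0 x]
      refine integral_congr_ae (MeasureTheory.ae_of_all _ fun t ht => ih ?_)
      exact (Set.uIoc_of_le hx.le ▸ ht).1
    rw [piMon, hint, ih hx, mul_binomSum, binomSum_succ]
    simp only [mul_integral_piBasis hq _ hx]

lemma hasDerivAt_piMon_y (A : ℝ) {q : ℝ} (hq : -1 < q) (n : ℕ) {x : ℝ} (hx : 0 < x) (y : ℝ) :
    HasDerivAt (fun y => piMon A q n x y)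
      (n * binomSum (fun j => piBasis A q j x) y (n - 1)) y := by
  simpa only [piMon_eq_binomSum A hq n _ hx] using hasDerivAt_binomSum _ y n

lemma hasDerivAt_rpow_mul_deriv_piMon (A : ℝ) {q : ℝ} (hq : -1 < q) (n : ℕ) {x : ℝ} (hx : 0 < x)
    (y : ℝ) :
    HasDerivAt (fun x => x ^ (1 - q) * deriv (fun x' => piMon A q n x' y) x)
      (A * (q + 1) * (n * binomSum (fun j => piBasis A q j x) y (n - 1))) x := by
  have hflux : (fun x => x ^ (1 - q) * deriv (fun x' => piMon A q n x' y) x)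
      =ᶠ[nhds x] fun x => binomSum (fun j => x ^ (1 - q) * deriv (piBasis A q j) x) y n := by
    filter_upwards [Ioi_mem_nhds hx] with t ht
    have hpi : (fun x' => piMon A q n x' y) =ᶠ[nhds t]
        fun x' => binomSum (fun j => piBasis A q j x') y n := by
      filter_upwards [Ioi_mem_nhds ht] with s hs using piMon_eq_binomSum A hq n y hs
    rw [hpi.deriv_eq, (HasDerivAt.binomSum y n
      fun j => (hasDerivAt_piBasis j ht.ne').differentiableAt.hasDerivAt).deriv, mul_binomSum]
  rw [← binomSum_natCast_mul_pred, mul_binomSum]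
  exact (HasDerivAt.binomSum (f := fun j x => x ^ (1 - q) * deriv (piBasis A q j) x) y n
    fun j => hasDerivAt_rpow_mul_deriv_piBasis hq j hx).congr_of_eventuallyEq hflux

/-- `πₙ(x,y)` satisfies the variable-conductivity heat equation
`∂πₙ/∂y = (1/(A(q+1))) D_x (x^{1-q} D_x πₙ)` with `y` as time. -/
theorem stmt18 (A q : ℝ) (hA : A ≠ 0) (hq : -1 < q) :
    ∀ n : ℕ, ∀ x : ℝ, 0 < x → ∀ y : ℝ, y ≠ 0 →
      deriv (fun y' => piMon A q n x y') y
        = (1 / (A * (q + 1))) *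
            deriv (fun x' => x' ^ (1 - q) *
              deriv (fun x'' => piMon A q n x'' y) x') x := by
  intro n x hx y _
  have hq1 : q + 1 ≠ 0 := by linarith
  rw [(hasDerivAt_piMon_y A hq n hx y).deriv, (hasDerivAt_rpow_mul_deriv_piMon A hq n hx y).deriv]
  field_simp
end
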